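/- ∫₀¹ log⁺|1 + e^{2πiθ}| dθ = (3√3/(4π)) · ∑_{n=1}^{∞} χ(n)/n², where χ is the nontrivial quadratic Dirichlet character modulo 3, i.e. χ(n) = 1, −1, 0 according to whether n ≡ 1, 2, 0 (mod 3). In particular this integral equals (3√3/(4π)) · L(2, χ). -/

import Mathlib

/-!
Since `‖1 + e^{2πiθ}‖ = 2|cos πθ|`, the integrand vanishes on `[1/3, 2/3]`, is symmetric under
`θ ↦ 1 - θ`, and equals `log ‖1 + e^{2πiθ}‖` on `[0, 1/3]`; so the integral is twice
`∫₀^{1/3} log ‖1 + e^{2πiθ}‖`. For `0 ≤ r < 1` the Taylor series of `log (1 + z)` gives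
`log ‖1 + r e^{2πiθ}‖ = ∑ (-1)ⁿ⁺¹ rⁿ cos (2πnθ) / n`, and integrating termwise over `[0, 1/3]`
produces `∑ (-1)ⁿ⁺¹ √3 χ(n) rⁿ / (4πn²)` because `sin (2πn/3) = √3 χ(n) / 2`. Letting `r → 1⁻`
(Abel's theorem on the series, continuity of the truncated integrand on the integral) and using
`χ(2) = -1`, which turns the alternating sum into `3/2 · L(2, χ)`, gives the result.
-/

open MeasureTheory Real intervalIntegral

/-- `log⁺ r = log (max 1 r)`. -/
noncomputable def logPlus (r : ℝ) : ℝ := Real.log (max 1 r)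

/-- The nontrivial quadratic Dirichlet character modulo 3, as a function on `ℕ`:
`χ(n) = 1, −1, 0` according to whether `n ≡ 1, 2, 0 (mod 3)`. -/
def chi3 (n : ℕ) : ℝ := if n % 3 = 1 then 1 else if n % 3 = 2 then -1 else 0

open Filter Topology

lemma abs_chi3_le_one (n : ℕ) : |chi3 n| ≤ 1 := by
  unfold chi3; split_ifs <;> norm_num

lemma chi3_two_mul (m : ℕ) : chi3 (2 * m) = -chi3 m := by
  obtain h | h | h : m % 3 = 0 ∨ m % 3 = 1 ∨ m % 3 = 2 := by omega
  all_goals simp [chi3, Nat.mul_mod, h]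

lemma sin_two_pi_mul_div_three (n : ℕ) : sin (2 * π * n / 3) = √3 / 2 * chi3 n := by
  have hperiod : sin (2 * π * n / 3) = sin (2 * π * (n % 3 : ℕ) / 3) := by
    have hn : (n : ℝ) = (n % 3 : ℕ) + 3 * (n / 3 : ℕ) := by
      exact_mod_cast (Nat.mod_add_div n 3).symm
    rw [hn, show 2 * π * ((n % 3 : ℕ) + 3 * (n / 3 : ℕ) : ℝ) / 3
      = 2 * π * (n % 3 : ℕ) / 3 + (n / 3 : ℕ) * (2 * π) by ring, sin_add_nat_mul_two_pi]
  have hchi : chi3 n = chi3 (n % 3) := by simp [chi3]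
  rw [hperiod, hchi]
  have : n % 3 < 3 := Nat.mod_lt n three_pos
  interval_cases n % 3
  · simp [chi3]
  · rw [show 2 * π * ((1 : ℕ) : ℝ) / 3 = π - π / 3 by push_cast; ring, sin_pi_sub,
      sin_pi_div_three]
    simp [chi3]
  · rw [show 2 * π * ((2 : ℕ) : ℝ) / 3 = π / 3 + π by push_cast; ring, sin_add_pi,
      sin_pi_div_three]
    simp [chi3]

lemma summable_chi3_div_sq : Summable fun n : ℕ => chi3 n / (n : ℝ) ^ 2 := by
  refine Summable.of_norm_bounded (summable_one_div_nat_pow.mpr one_lt_two) fun n => ?_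
  rw [norm_div, norm_pow, Real.norm_natCast, Real.norm_eq_abs]
  exact div_le_div_of_nonneg_right (abs_chi3_le_one n) (by positivity)

lemma tsum_neg_one_pow_succ_mul {f : ℕ → ℝ} (hf : Summable f) :
    ∑' n, (-1) ^ (n + 1) * f n = ∑' n, f n - 2 * ∑' k, f (2 * k) := by
  have he : Summable fun k => f (2 * k) := hf.comp_injective (mul_right_injective₀ two_ne_zero)
  have ho : Summable fun k => f (2 * k + 1) :=
    hf.comp_injective ((add_left_injective 1).comp (mul_right_injective₀ two_ne_zero))
  have hsign : ∀ k : ℕ, (-1 : ℝ) ^ (2 * k + 1) = -1 ∧ (-1 : ℝ) ^ (2 * k + 1 + 1) = 1 := fun k =>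
    ⟨by simp [pow_succ, pow_mul], by simp [pow_succ, pow_mul]⟩
  rw [← tsum_even_add_odd he ho, ← tsum_even_add_odd (by simpa [hsign] using he.neg)
    (by simpa [hsign] using ho)]
  simp only [hsign, neg_one_mul, one_mul, tsum_neg]
  ring

lemma tsum_neg_one_pow_succ_mul_chi3_div_sq :
    ∑' n : ℕ, (-1) ^ (n + 1) * (chi3 n / (n : ℝ) ^ 2) = 3 / 2 * ∑' n : ℕ, chi3 n / (n : ℝ) ^ 2 := by
  have heven : ∀ k : ℕ,
      chi3 (2 * k) / ((2 * k : ℕ) : ℝ) ^ 2 = -(1 / 4) * (chi3 k / (k : ℝ) ^ 2) := by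
    intro k
    rw [chi3_two_mul]
    push_cast
    ring
  rw [tsum_neg_one_pow_succ_mul summable_chi3_div_sq, tsum_congr heven, tsum_mul_left]
  ring

lemma one_half_le_cos {x : ℝ} (hx : |x| ≤ π / 3) : 1 / 2 ≤ cos x := by
  rw [← cos_abs, ← cos_pi_div_three]
  exact cos_le_cos_of_nonneg_of_le_pi (abs_nonneg x) (by linarith [pi_pos]) hx

lemma abs_cos_le_one_half {x : ℝ} (h₁ : π / 3 ≤ x) (h₂ : x ≤ 2 * π / 3) : |cos x| ≤ 1 / 2 := by
  rw [abs_le, ← cos_pi_div_three]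
  constructor
  · rw [neg_le, ← cos_pi_sub]
    exact cos_le_cos_of_nonneg_of_le_pi (by linarith [pi_pos]) (by linarith [pi_pos]) (by linarith)
  · exact cos_le_cos_of_nonneg_of_le_pi (by linarith [pi_pos]) (by linarith [pi_pos]) h₁

lemma re_exp_two_pi_I_mul (x : ℝ) : (Complex.exp (2 * π * Complex.I * x)).re = cos (2 * π * x) := by
  simp [Complex.exp_re]

lemma norm_ofReal_mul_exp_two_pi_I (r θ : ℝ) :
    ‖(r : ℂ) * Complex.exp (2 * π * Complex.I * θ)‖ = |r| := by
  simp [Complex.norm_exp]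

lemma norm_one_add_exp_two_pi_I (θ : ℝ) :
    ‖1 + Complex.exp (2 * π * Complex.I * θ)‖ = 2 * |cos (π * θ)| := by
  have h : 1 + Complex.exp (2 * π * Complex.I * θ)
      = 2 * Complex.cos (π * θ) * Complex.exp (π * θ * Complex.I) := by
    rw [Complex.two_cos, add_mul, ← Complex.exp_add, ← Complex.exp_add]
    ring_nf
    simp [add_comm]
  rw [h, norm_mul, norm_mul, ← Complex.ofReal_mul, Complex.norm_exp_ofReal_mul_I,
    ← Complex.ofReal_cos, Complex.norm_real, Complex.norm_two, Real.norm_eq_abs, mul_one]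

lemma one_half_le_norm_one_add_mul_exp {r θ : ℝ} (hr₀ : 0 ≤ r) (hr₁ : r ≤ 1) (hθ₀ : 0 ≤ θ)
    (hθ₁ : θ ≤ 1 / 3) : 1 / 2 ≤ ‖1 + r * Complex.exp (2 * π * Complex.I * θ)‖ := by
  have hcos : 1 / 2 ≤ cos (π * θ) :=
    one_half_le_cos (by rw [abs_of_nonneg (by positivity)]; nlinarith [pi_pos])
  have hre : (1 + r * Complex.exp (2 * π * Complex.I * θ)).re = 1 + r * cos (2 * π * θ) := by
    simp [re_exp_two_pi_I_mul]
  have hcos2 : cos (2 * π * θ) = 2 * cos (π * θ) ^ 2 - 1 := by rw [← cos_two_mul]; ring_nf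
  have hcos2_ge : -(1 / 2) ≤ cos (2 * π * θ) := by rw [hcos2]; nlinarith
  calc 1 / 2 ≤ 1 + r * cos (2 * π * θ) := by nlinarith
    _ = _ := hre.symm
    _ ≤ _ := Complex.re_le_norm _

lemma hasSum_log_norm_one_add_mul_exp {r : ℝ} (hr : |r| < 1) (θ : ℝ) :
    HasSum (fun n : ℕ => (-1) ^ (n + 1) * r ^ n / n * cos (2 * π * n * θ))
      (log ‖1 + r * Complex.exp (2 * π * Complex.I * θ)‖) := by
  have hz : ‖(r : ℂ) * Complex.exp (2 * π * Complex.I * θ)‖ < 1 := by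
    rwa [norm_ofReal_mul_exp_two_pi_I]
  rw [← Complex.log_re]
  convert Complex.hasSum_re (Complex.hasSum_taylorSeries_log hz) using 2 with n
  have h : (-1) ^ (n + 1) * ((r : ℂ) * Complex.exp (2 * π * Complex.I * θ)) ^ n / n
      = (((-1) ^ (n + 1) * r ^ n / n : ℝ) : ℂ) * Complex.exp (2 * π * Complex.I * (n * θ : ℝ)) := by
    rw [mul_pow, ← Complex.exp_nat_mul]
    push_cast
    ring_nf
  rw [h, Complex.re_ofReal_mul, re_exp_two_pi_I_mul, mul_assoc (2 * π)]

lemma integral_cos_two_pi_nat_mul {n : ℕ} (hn : n ≠ 0) :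
    ∫ θ in (0 : ℝ)..1 / 3, cos (2 * π * n * θ) = √3 * chi3 n / (4 * π * n) := by
  have hc : 2 * π * (n : ℝ) ≠ 0 := by positivity
  rw [integral_comp_mul_left cos hc, integral_cos, mul_zero, sin_zero, sub_zero, smul_eq_mul,
    show 2 * π * (n : ℝ) * (1 / 3) = 2 * π * n / 3 by ring, sin_two_pi_mul_div_three]
  field_simp
  ring

lemma hasSum_integral_log_norm_one_add_mul_exp {r : ℝ} (hr₀ : 0 ≤ r) (hr₁ : r < 1) :
    HasSum (fun n : ℕ => √3 / (4 * π) * ((-1) ^ (n + 1) * (chi3 n / (n : ℝ) ^ 2)) * r ^ n)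
      (∫ θ in (0 : ℝ)..1 / 3, log ‖1 + r * Complex.exp (2 * π * Complex.I * θ)‖) := by
  have hterm : ∀ n : ℕ, ∫ θ in (0 : ℝ)..1 / 3, (-1) ^ (n + 1) * r ^ n / n * cos (2 * π * n * θ)
      = √3 / (4 * π) * ((-1) ^ (n + 1) * (chi3 n / (n : ℝ) ^ 2)) * r ^ n := by
    intro n
    rcases eq_or_ne n 0 with rfl | hn
    · simp
    · rw [intervalIntegral.integral_const_mul, integral_cos_two_pi_nat_mul hn]
      field_simp
  have hbound : ∀ n : ℕ, ∀ θ : ℝ, ‖(-1) ^ (n + 1) * r ^ n / n * cos (2 * π * n * θ)‖ ≤ r ^ n := by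
    intro n θ
    rw [norm_mul, norm_div, norm_mul, norm_pow, norm_pow, norm_neg, norm_one, one_pow, one_mul,
      Real.norm_of_nonneg hr₀, Real.norm_natCast]
    calc r ^ n / n * ‖cos (2 * π * n * θ)‖ ≤ r ^ n / n * 1 := by
          gcongr; exact (Real.norm_eq_abs _).trans_le (abs_cos_le_one _)
      _ ≤ r ^ n := by
          rcases eq_or_ne n 0 with rfl | hn
          · simp
          · rw [mul_one]
            exact div_le_self (by positivity) (by exact_mod_cast Nat.one_le_iff_ne_zero.mpr hn)
  simp_rw [← hterm]
  exact hasSum_integral_of_dominated_convergence (fun n _ => r ^ n)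
    (fun n => (by fun_prop : Continuous _).aestronglyMeasurable)
    (fun n => ae_of_all _ fun θ _ => hbound n θ)
    (ae_of_all _ fun _ _ => summable_geometric_of_lt_one hr₀ hr₁) intervalIntegrable_const
    (ae_of_all _ fun θ _ => hasSum_log_norm_one_add_mul_exp (by rwa [abs_of_nonneg hr₀]) θ)

lemma tendsto_integral_log_norm_one_add_mul_exp :
    Tendsto (fun r : ℝ => ∫ θ in (0 : ℝ)..1 / 3, log ‖1 + r * Complex.exp (2 * π * Complex.I * θ)‖)
      (𝓝[<] 1) (𝓝 (∫ θ in (0 : ℝ)..1 / 3, log ‖1 + Complex.exp (2 * π * Complex.I * θ)‖)) := by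
  -- Truncating the norm below at `1 / 2` makes the integrand jointly continuous everywhere
  -- without changing it on `[0, 1] × [0, 1 / 3]`.
  set G : ℝ → ℝ → ℝ := fun r θ => log (max (1 / 2) ‖1 + r * Complex.exp (2 * π * Complex.I * θ)‖)
  have hG : Continuous (Function.uncurry G) :=
    (by fun_prop : Continuous fun p : ℝ × ℝ =>
      max (1 / 2) ‖1 + p.1 * Complex.exp (2 * π * Complex.I * p.2)‖).log
      fun p => ((by norm_num : (0 : ℝ) < 1 / 2).trans_le (le_max_left _ _)).ne'
  have hEq : ∀ r ∈ Set.Icc (0 : ℝ) 1,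
      ∫ θ in (0 : ℝ)..1 / 3, log ‖1 + r * Complex.exp (2 * π * Complex.I * θ)‖
        = ∫ θ in (0 : ℝ)..1 / 3, G r θ := by
    intro r hr
    refine integral_congr fun θ hθ => ?_
    rw [Set.uIcc_of_le (by norm_num)] at hθ
    simp only [G, max_eq_right (one_half_le_norm_one_add_mul_exp hr.1 hr.2 hθ.1 hθ.2)]
  have hlim := ((continuous_parametric_intervalIntegral_of_continuous' (μ := volume) hG 0
    (1 / 3)).tendsto 1).mono_left (nhdsWithin_le_nhds (s := Set.Iio 1))
  have hEq₁ := hEq 1 (by norm_num)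
  rw [Complex.ofReal_one] at hEq₁
  simp only [one_mul] at hEq₁
  rw [hEq₁]
  exact hlim.congr' <| eventually_of_mem (Ioo_mem_nhdsLT one_pos) fun r hr =>
    (hEq r (Set.Ioo_subset_Icc_self hr)).symm

lemma integral_log_norm_one_add_exp :
    ∫ θ in (0 : ℝ)..1 / 3, log ‖1 + Complex.exp (2 * π * Complex.I * θ)‖
      = √3 / (4 * π) * ∑' n : ℕ, (-1) ^ (n + 1) * (chi3 n / (n : ℝ) ^ 2) := by
  have hsum : Summable fun n : ℕ => (-1 : ℝ) ^ (n + 1) * (chi3 n / (n : ℝ) ^ 2) :=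
    summable_chi3_div_sq.norm.of_norm_bounded fun n => by simp
  have habel := Real.tendsto_tsum_powerSeries_nhdsWithin_lt
    ((hsum.mul_left (√3 / (4 * π))).hasSum.tendsto_sum_nat)
  rw [← tsum_mul_left]
  refine tendsto_nhds_unique tendsto_integral_log_norm_one_add_mul_exp (habel.congr' ?_)
  filter_upwards [Ioo_mem_nhdsLT one_pos] with r hr
  exact (hasSum_integral_log_norm_one_add_mul_exp hr.1.le hr.2).tsum_eq

lemma continuous_logPlus : Continuous logPlus :=
  (continuous_const.max continuous_id).log fun x => (one_pos.trans_le (le_max_left 1 x)).ne'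

lemma logPlus_of_le_one {x : ℝ} (hx : x ≤ 1) : logPlus x = 0 := by
  rw [logPlus, max_eq_left hx, log_one]

lemma logPlus_of_one_le {x : ℝ} (hx : 1 ≤ x) : logPlus x = log x := by
  rw [logPlus, max_eq_right hx]

lemma integral_logPlus_norm_one_add_exp :
    ∫ θ in (0 : ℝ)..1, logPlus ‖1 + Complex.exp (2 * π * Complex.I * θ)‖
      = 2 * ∫ θ in (0 : ℝ)..1 / 3, log ‖1 + Complex.exp (2 * π * Complex.I * θ)‖ := by
  simp only [norm_one_add_exp_two_pi_I]
  set g : ℝ → ℝ := fun θ => logPlus (2 * |cos (π * θ)|) with hg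
  have hint : ∀ a b : ℝ, IntervalIntegrable g volume a b := fun a b =>
    (continuous_logPlus.comp (by fun_prop)).intervalIntegrable a b
  have hfirst : ∫ θ in (0 : ℝ)..1 / 3, g θ = ∫ θ in (0 : ℝ)..1 / 3, log (2 * |cos (π * θ)|) := by
    refine integral_congr fun θ hθ => ?_
    rw [Set.uIcc_of_le (by norm_num)] at hθ
    have hcos : 1 / 2 ≤ cos (π * θ) := one_half_le_cos <| by
      rw [abs_of_nonneg (by nlinarith [pi_pos, hθ.1])]; nlinarith [pi_pos, hθ.2]
    exact logPlus_of_one_le (by rw [abs_of_nonneg (by linarith)]; linarith)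
  have hmiddle : ∫ θ in (1 / 3 : ℝ)..2 / 3, g θ = 0 := by
    refine (integral_congr (g := fun _ => (0 : ℝ)) fun θ hθ => ?_).trans integral_zero
    rw [Set.uIcc_of_le (by norm_num)] at hθ
    have hcos : |cos (π * θ)| ≤ 1 / 2 :=
      abs_cos_le_one_half (by nlinarith [pi_pos, hθ.1]) (by nlinarith [pi_pos, hθ.2])
    exact logPlus_of_le_one (by linarith)
  have hlast : ∫ θ in (2 / 3 : ℝ)..1, g θ = ∫ θ in (0 : ℝ)..1 / 3, g θ := by
    have h := integral_comp_sub_left g 1 (a := 0) (b := 1 / 3)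
    rw [sub_zero, show (1 : ℝ) - 1 / 3 = 2 / 3 by norm_num] at h
    rw [← h]
    refine integral_congr fun θ _ => ?_
    simp only [hg, mul_sub, mul_one, cos_pi_sub, abs_neg]
  rw [← integral_add_adjacent_intervals (hint 0 (1 / 3)) (hint (1 / 3) 1),
    ← integral_add_adjacent_intervals (hint (1 / 3) (2 / 3)) (hint (2 / 3) 1), hmiddle, hlast,
    hfirst]
  ring

theorem stmt4 :
    (∫ θ in (0:ℝ)..1, logPlus ‖1 + Complex.exp (2 * Real.pi * Complex.I * θ)‖)
      = (3 * Real.sqrt 3 / (4 * Real.pi)) * ∑' n : ℕ, chi3 n / (n : ℝ) ^ 2 := by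
  rw [integral_logPlus_norm_one_add_exp, integral_log_norm_one_add_exp,
    tsum_neg_one_pow_succ_mul_chi3_div_sq]
  ring
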